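/- Let mb : {0,1}* → ℚ be the word function assigning to w the maximum size of a block of 1's in w (a block of 1's is a maximal set of consecutive positions carrying the letter 1; mb(w) = 0 if w contains no 1). Then the Hankel matrix of mb has infinite rank over ℚ; hence mb is not recognizable by any weighted automaton over ℚ. -/

import Mathlib

/-!
Over a field, a function recognized by a weighted automaton `(α, μ, γ)` of size `r` has Hankel
rows `v ↦ (α μ(u)) μ(v) γ`, all in the image of one linear map out of `K^r`; so at most `r` rows
are linearly independent. For `maxBlock`, the row of `u_i = 1^(i+1) 0`, read on the columns `1^j`,
is `j ↦ max (i + 1) j`. Taking the second difference in `j` sends these rows to the unit vectors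
`e_i`, hence infinitely many rows are linearly independent.
-/

open Matrix

def wordProd {S : Type*} [CommSemiring S] {A : Type*} {r : ℕ}
    (μ : A → Matrix (Fin r) (Fin r) S) (w : List A) : Matrix (Fin r) (Fin r) S :=
  (w.map μ).prod

/-- Auxiliary: `maxRunAux w cur m` computes the maximum length of a run of `true`s in
`w`, where `cur` is the length of the current run and `m` the maximum seen so far. -/
def maxRunAux : List Bool → ℕ → ℕ → ℕ
  | [], cur, m => max cur m
  | true :: t, cur, m => maxRunAux t (cur + 1) m
  | false :: t, cur, m => maxRunAux t 0 (max cur m)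

/-- The maximum size of a block (maximal run) of `1`'s (`true`s) in a word; `0` if the
word contains no `1`. -/
def maxBlock (w : List Bool) : ℕ := maxRunAux w 0 0

section Hankel

variable {A K : Type*}

def hankelRow (f : List A → K) (u : List A) : List A → K := fun v => f (u ++ v)

theorem wordProd_append {S : Type*} [CommSemiring S] {r : ℕ}
    (μ : A → Matrix (Fin r) (Fin r) S) (u v : List A) :
    wordProd μ (u ++ v) = wordProd μ u * wordProd μ v := by
  simp only [wordProd, List.map_append, List.prod_append]

variable [Field K]

theorem card_le_of_linearIndependent_hankelRow {ι : Type*} [Fintype ι] {r : ℕ}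
    {f : List A → K} {α γ : Fin r → K} {μ : A → Matrix (Fin r) (Fin r) K}
    (hf : ∀ w, f w = α ⬝ᵥ (wordProd μ w *ᵥ γ)) {u : ι → List A}
    (hu : LinearIndependent K fun i => hankelRow f (u i)) :
    Fintype.card ι ≤ r := by
  let Θ : (Fin r → K) →ₗ[K] List A → K :=
    LinearMap.pi fun v =>
      (dotProductBilin K K : (Fin r → K) →ₗ[K] (Fin r → K) →ₗ[K] K).flip (wordProd μ v *ᵥ γ)
  have hrow : (fun i => hankelRow f (u i)) = Θ ∘ fun i => α ᵥ* wordProd μ (u i) := by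
    funext i v
    simp [Θ, hankelRow, hf, wordProd_append, ← mulVec_mulVec, dotProduct_mulVec]
  rw [hrow] at hu
  simpa using (hu.of_comp Θ).fintype_card_le_finrank

end Hankel

theorem linearIndependent_max_succ (R : Type*) [Ring R] [Nontrivial R] :
    LinearIndependent R fun i : ℕ => fun j : ℕ => ((max (i + 1) j : ℕ) : R) := by
  let Δ : (ℕ → R) →ₗ[R] ℕ → R := LinearMap.pi fun j =>
    LinearMap.proj (R := R) (φ := fun _ : ℕ => R) (j + 1) - LinearMap.proj j
  refine LinearIndependent.of_comp (Δ ∘ₗ Δ) ?_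
  convert Pi.linearIndependent_single_one ℕ R using 1
  funext i j
  simp only [Δ, Function.comp_apply, LinearMap.comp_apply, LinearMap.pi_apply, LinearMap.sub_apply,
    LinearMap.proj_apply, Pi.single_apply]
  have h : ((max (i + 1) (j + 1 + 1) : ℕ) : ℤ) - (max (i + 1) (j + 1) : ℕ)
      - ((max (i + 1) (j + 1) : ℕ) - (max (i + 1) j : ℕ)) = if j = i then 1 else 0 := by
    split_ifs <;> omega
  simpa only [Int.cast_sub, Int.cast_natCast, Int.cast_ite, Int.cast_one, Int.cast_zero] using
    congrArg (Int.cast : ℤ → R) h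

theorem maxRunAux_replicate_true_append (k : ℕ) (w : List Bool) (cur m : ℕ) :
    maxRunAux (List.replicate k true ++ w) cur m = maxRunAux w (cur + k) m := by
  induction k generalizing cur with
  | zero => rfl
  | succ k ih =>
    rw [List.replicate_succ, List.cons_append, maxRunAux, ih, Nat.add_right_comm, Nat.add_assoc]

theorem maxRunAux_eq_max (w : List Bool) (cur m : ℕ) :
    maxRunAux w cur m = max m (maxRunAux w cur 0) := by
  induction w generalizing cur m with
  | nil => simp only [maxRunAux]; omega
  | cons b w ih =>
    cases b with
    | true => exact ih _ _
    | false =>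
      simp only [maxRunAux]
      rw [ih 0 (max cur m), ih 0 (max cur 0)]
      omega

theorem maxBlock_replicate_true_append_false_cons (k : ℕ) (w : List Bool) :
    maxBlock (List.replicate k true ++ false :: w) = max k (maxBlock w) := by
  rw [maxBlock, maxRunAux_replicate_true_append, maxRunAux, maxRunAux_eq_max, maxBlock]
  omega

theorem maxBlock_replicate_true (k : ℕ) : maxBlock (List.replicate k true) = k := by
  rw [maxBlock, ← List.append_nil (List.replicate k true), maxRunAux_replicate_true_append]
  simp [maxRunAux]

theorem linearIndependent_hankelRow_maxBlock (R : Type*) [Ring R] [Nontrivial R] :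
    LinearIndependent R fun i : ℕ =>
      hankelRow (fun w => (maxBlock w : R)) (List.replicate (i + 1) true ++ [false]) := by
  refine LinearIndependent.of_comp (LinearMap.funLeft R R fun j => List.replicate j true) ?_
  convert linearIndependent_max_succ R using 1
  funext i j
  simp [hankelRow, LinearMap.funLeft_apply, maxBlock_replicate_true_append_false_cons,
    maxBlock_replicate_true]

/-- The Hankel matrix of the maximum-block-of-1's function has infinite rank over `ℚ`;
hence this function is not recognizable by any weighted automaton over `ℚ`. -/
theorem maxBlock_not_recognizable :
    (∀ n : ℕ, ∃ u : Fin n → List Bool,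
      LinearIndependent ℚ
        (fun i : Fin n => (fun v : List Bool => (maxBlock (u i ++ v) : ℚ)))) ∧
    ¬ ∃ (r : ℕ) (α γ : Fin r → ℚ) (μ : Bool → Matrix (Fin r) (Fin r) ℚ),
      ∀ w : List Bool, (maxBlock w : ℚ) = α ⬝ᵥ (wordProd μ w *ᵥ γ) := by
  have rows (n : ℕ) := (linearIndependent_hankelRow_maxBlock ℚ).comp (Fin.val : Fin n → ℕ)
    Fin.val_injective
  refine ⟨fun n => ⟨_, rows n⟩, ?_⟩
  rintro ⟨r, α, γ, μ, hμ⟩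
  simpa using card_le_of_linearIndependent_hankelRow hμ (rows (r + 1))
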